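/- arXiv:1903.09118 — 3 statements merged into one kernel-verified Lean document; each statement's English description precedes it below -/
import Mathlib

section
/- Let t_k = 2^(1-2^k), let λ > 0, q > 0, and let H : (0,1) → [0,∞) be locally integrable with ∫₀¹ H(x) dx ≤ C₀ ∫₀^{1/2} H(x) dx for some constant C₀. Then ∫₀¹ [(1 - log t)^λ ∫₀ᵗ H(x) dx]^q dt/((1 - log t)·t) is comparable (with constants depending only on λ, q, C₀) to Σ_{k∈ℕ} (∫₀^{t_k} H(x) dx)^q · 2^{λ k q}. -/
/-!
Cut `(0, 1)` into the blocks `[t_{k+1}, t_k)`. On the `k`-th block `1 - log t` lies between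
`2^k log 2` and `2^k`, the measure `dt / t` has mass `log t_k - log t_{k+1} = 2^k log 2`, and
`∫₀ᵗ H` lies between its values at the two endpoints. Hence the block contributes at most a
constant times `(∫₀^{t_k} H)^q 2^{λkq}` and at least a constant times
`(∫₀^{t_{k+1}} H)^q 2^{λkq}`. Summing gives the upper bound, and, after an index shift, the
lower bound for all terms of the series but the first; since `t_1 = 1/2`, the doubling
hypothesis bounds the first term by the second.
-/

open MeasureTheory Set ENNReal Filter Topology

noncomputable def tSeq (k : ℕ) : ℝ := (2:ℝ) ^ (1 - 2 ^ k : ℝ)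

lemma tSeq_pos (k : ℕ) : 0 < tSeq k := Real.rpow_pos_of_pos two_pos _

lemma tSeq_zero : tSeq 0 = 1 := by simp [tSeq]

lemma tSeq_one : tSeq 1 = 1 / 2 := by norm_num [tSeq, Real.rpow_neg_one]

lemma log_tSeq (k : ℕ) : Real.log (tSeq k) = (1 - 2 ^ k) * Real.log 2 :=
  Real.log_rpow two_pos _

lemma tSeq_antitone : Antitone tSeq :=
  antitone_nat_of_succ_le fun k =>
    Real.rpow_le_rpow_of_exponent_le one_le_two (by gcongr <;> norm_num)

lemma tSeq_le_one (k : ℕ) : tSeq k ≤ 1 := tSeq_zero ▸ tSeq_antitone k.zero_le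

lemma tendsto_tSeq_atTop : Tendsto tSeq atTop (𝓝 0) :=
  (tendsto_rpow_atBot_of_base_gt_one 2 one_lt_two).comp <|
    tendsto_atBot_add_const_left _ 1 <| tendsto_neg_atTop_atBot.comp <|
      tendsto_pow_atTop_atTop_of_one_lt one_lt_two

lemma log_tSeq_sub_log_tSeq_succ (k : ℕ) :
    Real.log (tSeq k) - Real.log (tSeq (k + 1)) = 2 ^ k * Real.log 2 := by
  rw [log_tSeq, log_tSeq, pow_succ]; ring

lemma mul_log_two_le_one_sub_log_tSeq (k : ℕ) : 2 ^ k * Real.log 2 ≤ 1 - Real.log (tSeq k) := by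
  rw [log_tSeq]; linarith [Real.log_two_lt_d9]

lemma one_sub_log_tSeq_le (k : ℕ) : 1 - Real.log (tSeq k) ≤ 2 ^ k := by
  rw [log_tSeq]
  nlinarith [Real.log_two_lt_d9, one_le_pow₀ (M₀ := ℝ) one_le_two (n := k)]

lemma one_sub_log_tSeq_pos (k : ℕ) : 0 < 1 - Real.log (tSeq k) :=
  (by positivity : (0:ℝ) < 2 ^ k * Real.log 2).trans_le (mul_log_two_le_one_sub_log_tSeq k)

theorem Antitone.iUnion_Ico_succ_eq_Ioo {β : Type*} [LinearOrder β] [TopologicalSpace β]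
    [OrderTopology β] {a : ℕ → β} {b : β} (ha : Antitone a) (hb : ∀ k, b < a k)
    (hlim : Tendsto a atTop (𝓝 b)) : ⋃ k, Ico (a (k + 1)) (a k) = Ioo b (a 0) := by
  classical
  ext x
  simp only [mem_iUnion, mem_Ico, mem_Ioo]
  constructor
  · rintro ⟨k, hk1, hk⟩
    exact ⟨(hb _).trans_le hk1, hk.trans_le (ha k.zero_le)⟩
  · rintro ⟨hbx, hx0⟩
    have hex : ∃ n, a n ≤ x :=
      (hlim.eventually (gt_mem_nhds hbx)).exists.imp fun _ => le_of_lt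
    obtain ⟨m, hm⟩ : ∃ m, Nat.find hex = m + 1 :=
      Nat.exists_eq_succ_of_ne_zero fun h0 => by simpa [h0, hx0.not_ge] using Nat.find_spec hex
    refine ⟨m, hm ▸ Nat.find_spec hex, not_le.mp (Nat.find_min hex ?_)⟩
    omega

lemma lintegral_Ico_ofReal_inv {a b : ℝ} (ha : 0 < a) (hab : a ≤ b) :
    ∫⁻ t in Ico a b, ENNReal.ofReal t⁻¹ = ENNReal.ofReal (Real.log b - Real.log a) := by
  have hint : IntegrableOn (fun t : ℝ => t⁻¹) (Ioc a b) :=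
    (continuousOn_inv₀.mono fun t ht => (ha.trans_le ht.1).ne').integrableOn_Icc.mono_set
      Ioc_subset_Icc_self
  rw [setLIntegral_congr Ico_ae_eq_Ioc, ← ofReal_integral_eq_lintegral_ofReal hint
    (ae_restrict_of_forall_mem measurableSet_Ioc fun t ht => (inv_pos.mpr (ha.trans ht.1)).le),
    ← intervalIntegral.integral_of_le hab, integral_inv_of_pos ha (ha.trans_le hab),
    Real.log_div (ha.trans_le hab).ne' ha.ne']

/-- The integrand of the theorem, with `I t` in place of `∫₀ᵗ H`. -/
noncomputable def logWeightIntegrand (lam q : ℝ) (I : ℝ → ℝ≥0∞) (t : ℝ) :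
    ℝ≥0∞ :=
  (ENNReal.ofReal ((1 - Real.log t) ^ lam) * I t) ^ q *
    ENNReal.ofReal (((1 - Real.log t) * t)⁻¹)

lemma ofReal_rpow_mul_rpow {x lam q : ℝ} (hx : 0 ≤ x) (hq : 0 ≤ q) (J : ℝ≥0∞) :
    (ENNReal.ofReal (x ^ lam) * J) ^ q = ENNReal.ofReal (x ^ (lam * q)) * J ^ q := by
  rw [ENNReal.mul_rpow_of_nonneg _ _ hq, ENNReal.ofReal_rpow_of_nonneg (by positivity) hq,
    Real.rpow_mul hx]

lemma two_rpow_mul_natCast_mul (lam q : ℝ) (k : ℕ) :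
    (2:ℝ) ^ (lam * k * q) = ((2:ℝ) ^ k) ^ (lam * q) := by
  rw [← Real.rpow_natCast_mul zero_le_two]; ring_nf

section Block

variable {lam q a b : ℝ} {I : ℝ → ℝ≥0∞}

lemma lintegral_Ico_const_mul_ofReal_inv (ha : 0 < a) (hab : a ≤ b) {x : ℝ} (hx : 0 ≤ x)
    (hq : 0 ≤ q) (J : ℝ≥0∞) (c : ℝ) :
    ∫⁻ t in Ico a b, (ENNReal.ofReal (x ^ lam) * J) ^ q * ENNReal.ofReal c⁻¹ *
        ENNReal.ofReal t⁻¹ =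
      ENNReal.ofReal (x ^ (lam * q) * ((Real.log b - Real.log a) / c)) * J ^ q := by
  have hlog : 0 ≤ Real.log b - Real.log a := sub_nonneg.mpr (Real.log_le_log ha hab)
  rw [lintegral_const_mul _ (by fun_prop), lintegral_Ico_ofReal_inv ha hab,
    ofReal_rpow_mul_rpow hx hq, div_eq_mul_inv, ENNReal.ofReal_mul (by positivity),
    ENNReal.ofReal_mul hlog]
  ring

lemma setLIntegral_Ico_logWeightIntegrand_le (hlam : 0 ≤ lam) (hq : 0 ≤ q) (hI : Monotone I)
    (ha : 0 < a) (hab : a ≤ b) (hb : b ≤ 1) :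
    ∫⁻ t in Ico a b, logWeightIntegrand lam q I t ≤
      ENNReal.ofReal ((1 - Real.log a) ^ (lam * q) *
        ((Real.log b - Real.log a) / (1 - Real.log b))) * I b ^ q := by
  have hb0 : 0 < 1 - Real.log b := by linarith [Real.log_nonpos (ha.trans_le hab).le hb]
  have ha0 : 0 ≤ 1 - Real.log a := by linarith [Real.log_le_log ha hab]
  rw [← lintegral_Ico_const_mul_ofReal_inv ha hab ha0 hq _ _]
  refine setLIntegral_mono' measurableSet_Ico fun t ⟨hat, htb⟩ => ?_
  have ht : 0 < t := ha.trans_le hat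
  have hlog : Real.log t ≤ Real.log b := Real.log_le_log ht htb.le
  have hIt : I t ≤ I b := hI htb.le
  have ht0 : 0 ≤ 1 - Real.log t := by linarith
  rw [mul_assoc, ← ENNReal.ofReal_mul (by positivity), ← mul_inv]
  unfold logWeightIntegrand
  gcongr

lemma le_setLIntegral_Ico_logWeightIntegrand (hlam : 0 ≤ lam) (hq : 0 ≤ q) (hI : Monotone I)
    (ha : 0 < a) (hab : a ≤ b) (hb : b ≤ 1) :
    ENNReal.ofReal ((1 - Real.log b) ^ (lam * q) *
        ((Real.log b - Real.log a) / (1 - Real.log a))) * I a ^ q ≤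
      ∫⁻ t in Ico a b, logWeightIntegrand lam q I t := by
  have hb0 : 0 < 1 - Real.log b := by linarith [Real.log_nonpos (ha.trans_le hab).le hb]
  have ha0 : 0 < 1 - Real.log a := by linarith [Real.log_le_log ha hab]
  rw [← lintegral_Ico_const_mul_ofReal_inv ha hab hb0.le hq _ _]
  refine setLIntegral_mono' measurableSet_Ico fun t ⟨hat, htb⟩ => ?_
  have ht : 0 < t := ha.trans_le hat
  have hlog : Real.log a ≤ Real.log t := Real.log_le_log ha hat
  have hIt : I a ≤ I t := hI hat
  have ht0 : 0 < 1 - Real.log t := by linarith [Real.log_le_log ht htb.le]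
  rw [mul_assoc, ← ENNReal.ofReal_mul (by positivity), ← mul_inv]
  unfold logWeightIntegrand
  gcongr

end Block

section Dyadic

variable {lam q : ℝ} {I : ℝ → ℝ≥0∞}

lemma setLIntegral_Ico_tSeq_le (hlam : 0 ≤ lam) (hq : 0 ≤ q) (hI : Monotone I) (k : ℕ) :
    ∫⁻ t in Ico (tSeq (k + 1)) (tSeq k), logWeightIntegrand lam q I t ≤
      ENNReal.ofReal (2 ^ (lam * q)) * (I (tSeq k) ^ q * ENNReal.ofReal (2 ^ (lam * k * q))) := by
  have hlq : 0 ≤ lam * q := mul_nonneg hlam hq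
  have hreal : (1 - Real.log (tSeq (k + 1))) ^ (lam * q) *
      ((Real.log (tSeq k) - Real.log (tSeq (k + 1))) / (1 - Real.log (tSeq k))) ≤
        2 ^ (lam * q) * 2 ^ (lam * k * q) := by
    rw [log_tSeq_sub_log_tSeq_succ, two_rpow_mul_natCast_mul,
      ← Real.mul_rpow zero_le_two (by positivity), ← pow_succ']
    have hpos := (one_sub_log_tSeq_pos (k + 1)).le
    have hle := one_sub_log_tSeq_le (k + 1)
    have hratio : 2 ^ k * Real.log 2 / (1 - Real.log (tSeq k)) ≤ 1 :=
      div_le_one_of_le₀ (mul_log_two_le_one_sub_log_tSeq k) (one_sub_log_tSeq_pos k).le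
    have hratio_nonneg : 0 ≤ 2 ^ k * Real.log 2 / (1 - Real.log (tSeq k)) :=
      div_nonneg (by positivity) (one_sub_log_tSeq_pos k).le
    calc _ ≤ ((2:ℝ) ^ (k + 1)) ^ (lam * q) * 1 := by gcongr
      _ = _ := mul_one _
  calc _ ≤ _ := setLIntegral_Ico_logWeightIntegrand_le hlam hq hI (tSeq_pos _)
          (tSeq_antitone k.le_succ) (tSeq_le_one k)
    _ ≤ ENNReal.ofReal (2 ^ (lam * q) * 2 ^ (lam * k * q)) * I (tSeq k) ^ q := by gcongr
    _ = _ := by rw [ENNReal.ofReal_mul (by positivity)]; ring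

lemma le_setLIntegral_Ico_tSeq (hlam : 0 ≤ lam) (hq : 0 ≤ q) (hI : Monotone I) (k : ℕ) :
    I (tSeq (k + 1)) ^ q * ENNReal.ofReal (2 ^ (lam * (k + 1 : ℕ) * q)) ≤
      ENNReal.ofReal ((2 / Real.log 2) ^ (lam * q + 1)) *
        ∫⁻ t in Ico (tSeq (k + 1)) (tSeq k), logWeightIntegrand lam q I t := by
  have hlq : 0 ≤ lam * q := mul_nonneg hlam hq
  have hL : 0 < Real.log 2 := Real.log_pos one_lt_two
  have hreal : (2:ℝ) ^ (lam * (k + 1 : ℕ) * q) ≤ (2 / Real.log 2) ^ (lam * q + 1) *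
      ((1 - Real.log (tSeq k)) ^ (lam * q) *
        ((Real.log (tSeq k) - Real.log (tSeq (k + 1))) / (1 - Real.log (tSeq (k + 1))))) := by
    have hlow := mul_log_two_le_one_sub_log_tSeq k
    have hratio : 1 ≤ 2 / Real.log 2 * (2 ^ k * Real.log 2 / (1 - Real.log (tSeq (k + 1)))) := by
      rw [show 2 / Real.log 2 * (2 ^ k * Real.log 2 / (1 - Real.log (tSeq (k + 1)))) =
        2 ^ (k + 1) / (1 - Real.log (tSeq (k + 1))) by field_simp; ring]
      exact (one_le_div (one_sub_log_tSeq_pos _)).mpr (one_sub_log_tSeq_le _)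
    rw [log_tSeq_sub_log_tSeq_succ, two_rpow_mul_natCast_mul, Real.rpow_add_one (by positivity)]
    calc ((2:ℝ) ^ (k + 1)) ^ (lam * q)
        = (2 / Real.log 2) ^ (lam * q) * (2 ^ k * Real.log 2) ^ (lam * q) * 1 := by
          rw [mul_one, ← Real.mul_rpow (by positivity) (by positivity)]
          congr 1
          field_simp
          ring
      _ ≤ (2 / Real.log 2) ^ (lam * q) * (1 - Real.log (tSeq k)) ^ (lam * q) *
          (2 / Real.log 2 * (2 ^ k * Real.log 2 / (1 - Real.log (tSeq (k + 1))))) := by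
          gcongr
          exact mul_nonneg (by positivity) (Real.rpow_nonneg (one_sub_log_tSeq_pos k).le _)
      _ = _ := by ring
  calc _ ≤ ENNReal.ofReal ((2 / Real.log 2) ^ (lam * q + 1)) *
        (ENNReal.ofReal ((1 - Real.log (tSeq k)) ^ (lam * q) *
          ((Real.log (tSeq k) - Real.log (tSeq (k + 1))) / (1 - Real.log (tSeq (k + 1))))) *
          I (tSeq (k + 1)) ^ q) := by
        rw [← mul_assoc, ← ENNReal.ofReal_mul (by positivity), mul_comm]
        gcongr
    _ ≤ _ := by
        gcongr
        exact le_setLIntegral_Ico_logWeightIntegrand hlam hq hI (tSeq_pos _)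
          (tSeq_antitone k.le_succ) (tSeq_le_one k)

end Dyadic

lemma lintegral_Ioo_zero_one_eq_tsum_Ico_tSeq (f : ℝ → ℝ≥0∞) :
    ∫⁻ t in Ioo 0 1, f t = ∑' k, ∫⁻ t in Ico (tSeq (k + 1)) (tSeq k), f t := by
  rw [← tSeq_zero, ← tSeq_antitone.iUnion_Ico_succ_eq_Ioo tSeq_pos tendsto_tSeq_atTop]
  exact lintegral_iUnion (fun _ => measurableSet_Ico)
    tSeq_antitone.pairwise_disjoint_on_Ico_succ _

section Comparison

variable {lam q : ℝ} {I : ℝ → ℝ≥0∞}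

theorem lintegral_logWeightIntegrand_le_tsum (hlam : 0 ≤ lam) (hq : 0 ≤ q) (hI : Monotone I) :
    ∫⁻ t in Ioo 0 1, logWeightIntegrand lam q I t ≤
      ENNReal.ofReal (2 ^ (lam * q)) *
        ∑' k : ℕ, I (tSeq k) ^ q * ENNReal.ofReal (2 ^ (lam * k * q)) := by
  rw [lintegral_Ioo_zero_one_eq_tsum_Ico_tSeq, ← ENNReal.tsum_mul_left]
  exact ENNReal.tsum_le_tsum (setLIntegral_Ico_tSeq_le hlam hq hI)

theorem tsum_le_lintegral_logWeightIntegrand (hlam : 0 ≤ lam) (hq : 0 ≤ q) (hI : Monotone I)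
    {C₀ : ℝ} (hI₁ : I 1 ≤ ENNReal.ofReal C₀ * I (1 / 2)) :
    ∑' k : ℕ, I (tSeq k) ^ q * ENNReal.ofReal (2 ^ (lam * k * q)) ≤
      (ENNReal.ofReal C₀ ^ q + 1) * ENNReal.ofReal ((2 / Real.log 2) ^ (lam * q + 1)) *
        ∫⁻ t in Ioo 0 1, logWeightIntegrand lam q I t := by
  set G : ℕ → ℝ≥0∞ := fun k => I (tSeq k) ^ q * ENNReal.ofReal (2 ^ (lam * k * q))
  have htail : ∑' k, G (k + 1) ≤ ENNReal.ofReal ((2 / Real.log 2) ^ (lam * q + 1)) *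
      ∫⁻ t in Ioo 0 1, logWeightIntegrand lam q I t := by
    rw [lintegral_Ioo_zero_one_eq_tsum_Ico_tSeq, ← ENNReal.tsum_mul_left]
    exact ENNReal.tsum_le_tsum (le_setLIntegral_Ico_tSeq hlam hq hI)
  have hhead : G 0 ≤ ENNReal.ofReal C₀ ^ q * ∑' k, G (k + 1) := calc
    G 0 = I 1 ^ q := by simp [G, tSeq_zero]
    _ ≤ (ENNReal.ofReal C₀ * I (tSeq 1)) ^ q := by rw [tSeq_one]; gcongr
    _ = ENNReal.ofReal C₀ ^ q * I (tSeq 1) ^ q := ENNReal.mul_rpow_of_nonneg _ _ hq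
    _ ≤ ENNReal.ofReal C₀ ^ q * G 1 := by
        gcongr
        exact le_mul_of_one_le_right' <| ENNReal.one_le_ofReal.mpr <|
          Real.one_le_rpow one_le_two (by positivity)
    _ ≤ ENNReal.ofReal C₀ ^ q * ∑' k, G (k + 1) := by gcongr; exact ENNReal.le_tsum 0
  calc ∑' k, G k = G 0 + ∑' k, G (k + 1) := tsum_eq_zero_add' ENNReal.summable
    _ ≤ (ENNReal.ofReal C₀ ^ q + 1) * ∑' k, G (k + 1) := by rw [add_mul, one_mul]; gcongr
    _ ≤ _ := by rw [mul_assoc]; gcongr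

end Comparison

/-- With `t_k = 2^(1-2^k)`, `λ > 0`, `q > 0`, for `H : (0,1) → [0,∞)` locally integrable
with `∫₀¹ H ≤ C₀ ∫₀^{1/2} H`, the quantity
`∫₀¹ [(1 - log t)^λ ∫₀ᵗ H]^q dt/((1-log t) t)` is comparable (constants depending only on
`λ, q, C₀`) to `∑ₖ (∫₀^{t_k} H)^q 2^{λkq}`. -/
theorem stmt_3 (lam q C₀ : ℝ) (hlam : 0 < lam) (hq : 0 < q) :
    ∃ C : ℝ≥0∞, 0 < C ∧ C ≠ ⊤ ∧
      ∀ H : ℝ → ℝ≥0∞, Measurable H →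
        (∫⁻ x in Ioo (0:ℝ) 1, H x) ≤ ENNReal.ofReal C₀ * ∫⁻ x in Ioo (0:ℝ) (1/2), H x →
        ((∫⁻ t in Ioo (0:ℝ) 1,
            (ENNReal.ofReal ((1 - Real.log t) ^ lam) * ∫⁻ x in Ioo (0:ℝ) t, H x) ^ q *
              ENNReal.ofReal (((1 - Real.log t) * t)⁻¹)) ≤
            C * ∑' k : ℕ, (∫⁻ x in Ioo (0:ℝ) ((2:ℝ) ^ (1 - 2 ^ k : ℝ)), H x) ^ q *
              ENNReal.ofReal ((2:ℝ) ^ (lam * k * q))) ∧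
        ((∑' k : ℕ, (∫⁻ x in Ioo (0:ℝ) ((2:ℝ) ^ (1 - 2 ^ k : ℝ)), H x) ^ q *
              ENNReal.ofReal ((2:ℝ) ^ (lam * k * q))) ≤
            C * ∫⁻ t in Ioo (0:ℝ) 1,
              (ENNReal.ofReal ((1 - Real.log t) ^ lam) * ∫⁻ x in Ioo (0:ℝ) t, H x) ^ q *
                ENNReal.ofReal (((1 - Real.log t) * t)⁻¹)) := by
  have hmono (H : ℝ → ℝ≥0∞) : Monotone fun t => ∫⁻ x in Ioo (0:ℝ) t, H x :=
    fun _ _ hst => lintegral_mono_set (Ioo_subset_Ioo_right hst)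
  refine ⟨ENNReal.ofReal (2 ^ (lam * q)) +
      (ENNReal.ofReal C₀ ^ q + 1) * ENNReal.ofReal ((2 / Real.log 2) ^ (lam * q + 1)),
    (ENNReal.ofReal_pos.mpr (by positivity)).trans_le le_self_add,
    by finiteness, fun H _ hH => ⟨?_, ?_⟩⟩
  · exact (lintegral_logWeightIntegrand_le_tsum hlam.le hq.le (hmono H)).trans
      (by gcongr ?_ * _; exact le_self_add)
  · exact (tsum_le_lintegral_logWeightIntegrand hlam.le hq.le (hmono H) hH).trans
      (by gcongr ?_ * _; exact le_add_self)
end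

section
/- Let λ > 0, q > 0, and let H : (0,1) → [0,∞) be locally integrable with ∫₀¹ H ≤ C₀ ∫₀^{1/2} H. With t_k = 2^(1-2^k), the sum Σ_{k∈ℕ} (∫₀^{t_k} H(x) dx)^q · 2^{λkq} is comparable to Σ_{k∈ℕ} (2^{λk} ∫_{t_{k+1}}^{t_k} H(x) dx)^q, with constants depending only on λ, q, C₀. -/
open MeasureTheory Set ENNReal Filter Topology

/-!
Write `a_j = ∫_{t_{j+1}}^{t_j} H`. Since the `t_j` decrease to `0`, `∫₀^{t_k} H = ∑_{j ≥ k} a_j`,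
so one inequality holds termwise and the other is a discrete Hardy inequality for tails with
geometric weight `ρ = 2^λ > 1`. For it, put `σ = √ρ` and split
`ρ^k a_{k+j} = σ^{-j} · (σ^{-j} ρ^{k+j} a_{k+j})`; the elementary bound
`(∑ w_j y_j)^q ≤ (∑ w_j)^q ∑ y_j^q` (each `y_j ≤ (∑ y^q)^{1/q}`) then leaves a geometric series
in `σ^{-q}` after summing over `k`.
-/

namespace ENNReal

theorem tsum_mul_rpow_le {ι : Type*} {q : ℝ} (hq : 0 < q) (w y : ι → ℝ≥0∞) :
    (∑' i, w i * y i) ^ q ≤ (∑' i, w i) ^ q * ∑' i, y i ^ q := by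
  have hy : ∀ i, y i ≤ (∑' j, y j ^ q) ^ q⁻¹ := fun i =>
    (le_rpow_inv_iff hq).2 (ENNReal.le_tsum i)
  calc (∑' i, w i * y i) ^ q ≤ ((∑' i, w i) * (∑' j, y j ^ q) ^ q⁻¹) ^ q := by
        rw [← ENNReal.tsum_mul_right]
        gcongr with i
        exact hy i
    _ = (∑' i, w i) ^ q * ∑' i, y i ^ q := by
        rw [mul_rpow_of_nonneg _ _ hq.le, rpow_inv_rpow hq.ne']

theorem tsum_rpow_mul_tsum_tail_le {σ : ℝ≥0∞} (hσ0 : σ ≠ 0) (hσ : σ ≠ ⊤) {q : ℝ} (hq : 0 < q)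
    (a : ℕ → ℝ≥0∞) :
    ∑' k, ((σ * σ) ^ k * ∑' j, a (k + j)) ^ q ≤
      (∑' j, σ⁻¹ ^ j) ^ q * (∑' j, (σ⁻¹ ^ q) ^ j) * ∑' k, ((σ * σ) ^ k * a k) ^ q := by
  set b : ℕ → ℝ≥0∞ := fun n => (σ * σ) ^ n * a n
  have hsplit : ∀ k j : ℕ, (σ * σ) ^ k * a (k + j) = σ⁻¹ ^ j * (σ⁻¹ ^ j * b (k + j)) := by
    intro k j
    calc (σ * σ) ^ k * a (k + j) = (σ * σ) ^ k * (σ⁻¹ * σ) ^ j * (σ⁻¹ * σ) ^ j * a (k + j) := by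
          rw [ENNReal.inv_mul_cancel hσ0 hσ, one_pow, mul_one, mul_one]
      _ = σ⁻¹ ^ j * (σ⁻¹ ^ j * b (k + j)) := by ring
  have hweight : ∀ j n : ℕ, (σ⁻¹ ^ j * b n) ^ q = (σ⁻¹ ^ q) ^ j * b n ^ q := by
    intro j n
    rw [mul_rpow_of_nonneg _ _ hq.le, ← rpow_natCast, ← rpow_mul, mul_comm (j : ℝ), rpow_mul_natCast]
  calc ∑' k, ((σ * σ) ^ k * ∑' j, a (k + j)) ^ q
      = ∑' k, (∑' j, σ⁻¹ ^ j * (σ⁻¹ ^ j * b (k + j))) ^ q := by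
        simp only [← ENNReal.tsum_mul_left, hsplit]
    _ ≤ ∑' k, (∑' j, σ⁻¹ ^ j) ^ q * ∑' j, (σ⁻¹ ^ q) ^ j * b (k + j) ^ q := by
        gcongr with k
        exact (tsum_mul_rpow_le hq _ _).trans_eq (by simp only [hweight])
    _ = (∑' j, σ⁻¹ ^ j) ^ q * ∑' j, (σ⁻¹ ^ q) ^ j * ∑' k, b (k + j) ^ q := by
        rw [ENNReal.tsum_mul_left, ENNReal.tsum_comm]
        simp only [ENNReal.tsum_mul_left]
    _ ≤ (∑' j, σ⁻¹ ^ j) ^ q * ∑' j, (σ⁻¹ ^ q) ^ j * ∑' n, b n ^ q := by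
        refine mul_le_mul_right (ENNReal.tsum_le_tsum fun j => mul_le_mul_right ?_ _) _
        exact tsum_comp_le_tsum_of_injective (add_left_injective j) fun n => b n ^ q
    _ = (∑' j, σ⁻¹ ^ j) ^ q * (∑' j, (σ⁻¹ ^ q) ^ j) * ∑' n, b n ^ q := by
        rw [ENNReal.tsum_mul_right, mul_assoc]

theorem exists_tsum_rpow_mul_tsum_tail_le {ρ : ℝ≥0∞} (hρ : 1 < ρ) (hρ' : ρ ≠ ⊤) {q : ℝ}
    (hq : 0 < q) : ∃ C : ℝ≥0∞, C ≠ ⊤ ∧ ∀ a : ℕ → ℝ≥0∞,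
      ∑' k, (ρ ^ k * ∑' j, a (k + j)) ^ q ≤ C * ∑' k, (ρ ^ k * a k) ^ q := by
  set σ : ℝ≥0∞ := ρ ^ (2⁻¹ : ℝ)
  have hσ1 : 1 < σ := one_lt_rpow hρ (by norm_num)
  have hσσ : σ * σ = ρ := by
    rw [← pow_two, ← rpow_natCast, ← rpow_mul]; norm_num
  refine ⟨_, ?_, fun a => hσσ ▸ tsum_rpow_mul_tsum_tail_le (zero_lt_one.trans hσ1).ne'
    (rpow_ne_top_of_nonneg (by norm_num) hρ') hq a⟩
  have hinv : σ⁻¹ < 1 := ENNReal.inv_lt_one.2 hσ1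
  refine mul_ne_top (rpow_ne_top_of_nonneg hq.le ?_) ?_ <;> rw [tsum_geometric, inv_ne_top]
  exacts [(tsub_pos_of_lt hinv).ne', (tsub_pos_of_lt (rpow_lt_one hinv hq)).ne']

end ENNReal

theorem Antitone.iUnion_Ioc_succ_eq_Ioc {α : Type*} [LinearOrder α] [TopologicalSpace α]
    [OrderClosedTopology α] {t : ℕ → α} {a : α} (ht : Antitone t) (hbot : ∀ n, a ≤ t n)
    (hlim : Tendsto t atTop (𝓝 a)) : ⋃ n, Ioc (t (n + 1)) (t n) = Ioc a (t 0) := by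
  refine subset_antisymm (iUnion_subset fun n => Ioc_subset_Ioc (hbot _) (ht n.zero_le)) ?_
  rintro x ⟨hax, hx0⟩
  by_contra hx
  simp only [mem_iUnion, mem_Ioc, not_exists, not_and, not_le] at hx
  have hle : ∀ n, x ≤ t n := fun n => by
    induction n with
    | zero => exact hx0
    | succ n ih => exact not_lt.1 fun h => (hx n h).not_ge ih
  obtain ⟨n, hn⟩ := (hlim.eventually (isOpen_Iio.mem_nhds hax)).exists
  exact (hle n).not_gt hn

theorem Antitone.lintegral_Ioc_eq_tsum {α : Type*} [LinearOrder α] [TopologicalSpace α]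
    [OrderClosedTopology α] [MeasurableSpace α] [OpensMeasurableSpace α] {μ : Measure α}
    {t : ℕ → α} {a : α} (ht : Antitone t) (hbot : ∀ n, a ≤ t n)
    (hlim : Tendsto t atTop (𝓝 a)) (f : α → ℝ≥0∞) :
    ∫⁻ x in Ioc a (t 0), f x ∂μ = ∑' n, ∫⁻ x in Ioc (t (n + 1)) (t n), f x ∂μ := by
  have hdisj : Pairwise (Function.onFun Disjoint fun n => Ioc (t (n + 1)) (t n)) :=
    ht.pairwise_disjoint_on_Ioc_succ
  rw [← ht.iUnion_Ioc_succ_eq_Ioc hbot hlim, lintegral_iUnion (fun _ => measurableSet_Ioc) hdisj]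

noncomputable def node (k : ℕ) : ℝ := 2 ^ (1 - 2 ^ k : ℝ)

theorem node_pos (k : ℕ) : 0 < node k := Real.rpow_pos_of_pos two_pos _

theorem node_antitone : Antitone node := fun m n hmn =>
  Real.rpow_le_rpow_of_exponent_le one_le_two <| by gcongr; norm_num

theorem tendsto_node_atTop : Tendsto node atTop (𝓝 0) := by
  refine (tendsto_rpow_atBot_of_base_gt_one 2 one_lt_two).comp ?_
  exact tendsto_atBot_add_const_left _ 1 <| tendsto_neg_atTop_atBot.comp <|
    tendsto_pow_atTop_atTop_of_one_lt one_lt_two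

theorem lintegral_Ioo_zero_node_eq_tsum (f : ℝ → ℝ≥0∞) (k : ℕ) :
    ∫⁻ x in Ioo 0 (node k), f x = ∑' j, ∫⁻ x in Ioo (node (k + j + 1)) (node (k + j)), f x := by
  have hshift : Antitone fun j => node (k + j) :=
    node_antitone.comp_monotone fun _ _ h => Nat.add_le_add_left h k
  have := hshift.lintegral_Ioc_eq_tsum (μ := volume) (fun j => (node_pos _).le)
    (tendsto_node_atTop.comp (tendsto_atTop_mono (Nat.le_add_left · k) tendsto_id)) f
  simpa only [add_zero, ← add_assoc, setLIntegral_congr Ioo_ae_eq_Ioc] using this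

/-- With `t_k = 2^(1-2^k)`, `λ > 0`, `q > 0`, for `H : (0,1) → [0,∞)` locally integrable
with `∫₀¹ H ≤ C₀ ∫₀^{1/2} H`, the sum `∑ₖ (∫₀^{t_k} H)^q 2^{λkq}` is comparable
(constants depending only on `λ, q, C₀`) to `∑ₖ (2^{λk} ∫_{t_{k+1}}^{t_k} H)^q`. -/
theorem stmt_4 (lam q C₀ : ℝ) (hlam : 0 < lam) (hq : 0 < q) :
    ∃ C : ℝ≥0∞, 0 < C ∧ C ≠ ⊤ ∧
      ∀ H : ℝ → ℝ≥0∞, Measurable H →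
        (∫⁻ x in Ioo (0:ℝ) 1, H x) ≤ ENNReal.ofReal C₀ * ∫⁻ x in Ioo (0:ℝ) (1/2), H x →
        ((∑' k : ℕ, (∫⁻ x in Ioo (0:ℝ) ((2:ℝ) ^ (1 - 2 ^ k : ℝ)), H x) ^ q *
              ENNReal.ofReal ((2:ℝ) ^ (lam * k * q))) ≤
            C * ∑' k : ℕ,
              (ENNReal.ofReal ((2:ℝ) ^ (lam * k)) *
                ∫⁻ x in Ioo ((2:ℝ) ^ (1 - 2 ^ (k+1) : ℝ)) ((2:ℝ) ^ (1 - 2 ^ k : ℝ)), H x) ^ q) ∧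
        ((∑' k : ℕ,
              (ENNReal.ofReal ((2:ℝ) ^ (lam * k)) *
                ∫⁻ x in Ioo ((2:ℝ) ^ (1 - 2 ^ (k+1) : ℝ)) ((2:ℝ) ^ (1 - 2 ^ k : ℝ)), H x) ^ q) ≤
            C * ∑' k : ℕ, (∫⁻ x in Ioo (0:ℝ) ((2:ℝ) ^ (1 - 2 ^ k : ℝ)), H x) ^ q *
              ENNReal.ofReal ((2:ℝ) ^ (lam * k * q))) := by
  set ρ := ENNReal.ofReal (2 ^ lam)
  have hρk (k : ℕ) : ENNReal.ofReal (2 ^ (lam * k)) = ρ ^ k := by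
    rw [Real.rpow_mul_natCast zero_le_two, ofReal_pow (by positivity)]
  have hρkq (k : ℕ) (x : ℝ≥0∞) : x ^ q * ENNReal.ofReal (2 ^ (lam * k * q)) = (ρ ^ k * x) ^ q := by
    rw [Real.rpow_mul zero_le_two, ← ofReal_rpow_of_pos (by positivity), hρk,
      mul_rpow_of_nonneg _ _ hq.le, mul_comm]
  obtain ⟨C, hC, hardy⟩ := exists_tsum_rpow_mul_tsum_tail_le
    (one_lt_ofReal.2 (Real.one_lt_rpow one_lt_two hlam)) ofReal_ne_top hq
  refine ⟨max C 1, lt_max_of_lt_right one_pos, max_ne_top hC one_ne_top, fun H _ _ => ?_⟩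
  simp only [← node.eq_1, lintegral_Ioo_zero_node_eq_tsum, hρkq, hρk]
  set a : ℕ → ℝ≥0∞ := fun n => ∫⁻ x in Ioo (node (n + 1)) (node n), H x
  refine ⟨(hardy a).trans (mul_le_mul_left (le_max_left _ _) _), ?_⟩
  refine le_trans ?_ (le_mul_of_one_le_left zero_le (le_max_right _ _))
  exact ENNReal.tsum_le_tsum fun k => by gcongr; exact ENNReal.le_tsum (f := fun j => a (k + j)) 0
end

section
/- Let n ≥ 2, n' = n/(n-1), and 1/n' < α ≤ 1. Then there exists c > 0 such that for every v in the small Lebesgue space L^{(n'}, one has ‖v‖_{L^{n',∞}} ≤ c ‖v‖_{L^{n')}}^{1-α} ‖v‖_{L^{(n'}}^α. -/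
/-!
Write `X(s) = s^{1/p} v_*(s)`, `Φ(s) = (∫₀ˢ v_*^p)^{1/p}` and `L(s) = 1 - log s`. Since `v_*`
decreases, `X(s) ≤ Φ(s)` and `(s/2)^{1/p} v_*(s) ≤ (∫_{s/2}^1 v_*^p)^{1/p}`; the latter gives
`X(s) ≤ 4 L(s)^{1/p} ‖v‖_{L^{p)}}`. Since `Φ` increases, the small norm is at least
`L(s)^{-1/p} Φ(s) ∫ₛ¹ du/u = L(s)^{-1/p} (L(s) - 1) Φ(s)`, so `X(s) ≤ 2 L(s)^{1/p-1} ‖v‖_{L^{(p}}`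
once `L(s) ≥ 2`. In the geometric mean of the two bounds with weights `1 - α` and `α` the powers
of `L` combine to `L(s)^{1/p-α} ≤ 1`. Points `s > e⁻¹` are reduced to `s = e⁻¹` by monotonicity
of `v_*`.
-/

open MeasureTheory Set ENNReal

noncomputable section

/-- The decreasing rearrangement of `f` with respect to the measure `μ` on `ℝ`:
`f_*(s) = inf {l ≥ 0 : μ{|f| > l} ≤ s}`. -/
def rearr (μ : Measure ℝ) (f : ℝ → ℝ) (s : ℝ) : ℝ :=
  sInf {l : ℝ | 0 ≤ l ∧ μ {x | l < |f x|} ≤ ENNReal.ofReal s}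

/-- Lebesgue measure on the underlying probability measure space `(0,1)`. -/
def μ0 : Measure ℝ := volume.restrict (Ioo (0:ℝ) 1)

/-- The `L^p` norm expressed through the decreasing rearrangement. -/
def lpNorm (p : ℝ) (f : ℝ → ℝ) : ℝ≥0∞ :=
  (∫⁻ s in Ioo (0:ℝ) 1, ENNReal.ofReal (rearr μ0 f s ^ p)) ^ (1/p)

/-- The weak `L^{p,∞}` quasinorm `sup_{0<s<1} s^{1/p} f_*(s)`. -/
def weakNorm (p : ℝ) (f : ℝ → ℝ) : ℝ≥0∞ :=
  ⨆ s ∈ Ioo (0:ℝ) 1, ENNReal.ofReal (s ^ (1/p) * rearr μ0 f s)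

/-- The small Lebesgue space norm
`‖f‖_{L^{(p}} = ∫₀¹ (1-log s)^{-1/p} (∫₀ˢ f_*(u)^p du)^{1/p} ds/s`. -/
def smallNorm (p : ℝ) (f : ℝ → ℝ) : ℝ≥0∞ :=
  ∫⁻ s in Ioo (0:ℝ) 1,
    ENNReal.ofReal ((1 - Real.log s) ^ (-(1/p)) / s) *
      (∫⁻ u in Ioo (0:ℝ) s, ENNReal.ofReal (rearr μ0 f u ^ p)) ^ (1/p)

/-- The grand Lebesgue space norm
`‖f‖_{L^{p),θ}} = sup_{0<s<1} (1-log s)^{-θ/p} (∫ₛ¹ f_*(x)^p dx)^{1/p}`. -/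
def grandNorm (p θ : ℝ) (f : ℝ → ℝ) : ℝ≥0∞ :=
  ⨆ s ∈ Ioo (0:ℝ) 1,
    ENNReal.ofReal ((1 - Real.log s) ^ (-(θ/p))) *
      (∫⁻ x in Ioo s 1, ENNReal.ofReal (rearr μ0 f x ^ p)) ^ (1/p)

/-- The Peetre `K`-functional for a couple of (quasi)normed function spaces with
(quasi)norms `N0`, `N1`: `K(f,t) = inf {N0(g) + t N1(h) : f = g + h}`. -/
def Kfun (N0 N1 : (ℝ → ℝ) → ℝ≥0∞) (f : ℝ → ℝ) (t : ℝ) : ℝ≥0∞ :=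
  ⨅ (g : ℝ → ℝ) (h : ℝ → ℝ) (_ : f = g + h), N0 g + ENNReal.ofReal t * N1 h

instance : IsProbabilityMeasure μ0 :=
  ⟨by simp [μ0]⟩

lemma rearr_nonneg (μ : Measure ℝ) (f : ℝ → ℝ) (s : ℝ) : 0 ≤ rearr μ f s :=
  Real.sInf_nonneg fun _ hl => hl.1

lemma rearr_set_nonempty {μ : Measure ℝ} [IsFiniteMeasure μ] {f : ℝ → ℝ} (hf : Measurable f)
    {s : ℝ} (hs : 0 < s) :
    {l : ℝ | 0 ≤ l ∧ μ {x | l < |f x|} ≤ ENNReal.ofReal s}.Nonempty := by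
  have hanti : Antitone fun k : ℕ => {x | (k : ℝ) < |f x|} :=
    fun i j hij x (hx : (j : ℝ) < |f x|) => show (i : ℝ) < |f x| from
      (Nat.cast_le.2 hij).trans_lt hx
  have hempty : ⋂ k : ℕ, {x | (k : ℝ) < |f x|} = ∅ :=
    iInter_eq_empty_iff.2 fun x => (exists_nat_ge |f x|).imp fun _ hk => hk.not_gt
  have htendsto := tendsto_measure_iInter_atTop
    (fun k => (measurableSet_lt measurable_const hf.abs).nullMeasurableSet) hanti
    ⟨0, measure_ne_top μ _⟩
  rw [hempty, measure_empty] at htendsto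
  obtain ⟨k, hk⟩ := (htendsto.eventually (gt_mem_nhds (ofReal_pos.2 hs))).exists
  exact ⟨k, k.cast_nonneg, hk.le⟩

lemma rearr_antitoneOn {μ : Measure ℝ} [IsFiniteMeasure μ] {f : ℝ → ℝ} (hf : Measurable f) :
    AntitoneOn (rearr μ f) (Ioi 0) := fun _ hu _ _ hus =>
  csInf_le_csInf ⟨0, fun _ hl => hl.1⟩ (rearr_set_nonempty hf hu)
    fun _ hl => ⟨hl.1, hl.2.trans (ofReal_le_ofReal hus)⟩

lemma ENNReal.le_rpow_mul_rpow_of_le {x a b : ℝ≥0∞} {α : ℝ} (hα₀ : 0 ≤ α) (hα₁ : α ≤ 1)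
    (ha : x ≤ a) (hb : x ≤ b) : x ≤ a ^ (1 - α) * b ^ α :=
  calc x = x ^ (1 - α) * x ^ α := by
        rw [← ENNReal.rpow_add_of_nonneg _ _ (by linarith) hα₀, sub_add_cancel, rpow_one]
    _ ≤ a ^ (1 - α) * b ^ α := by gcongr

lemma lintegral_Ioo_inv {a b : ℝ} (ha : 0 < a) (hab : a ≤ b) :
    ∫⁻ u in Ioo a b, ENNReal.ofReal u⁻¹ = ENNReal.ofReal (Real.log (b / a)) := by
  have hint : IntegrableOn (fun u : ℝ => u⁻¹) (Ioo a b) :=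
    ((continuousOn_inv₀.mono fun _ hu => (ha.trans_le hu.1).ne').integrableOn_Icc).mono_set
      Ioo_subset_Icc_self
  rw [← ofReal_integral_eq_lintegral_ofReal hint
      ((ae_restrict_iff' measurableSet_Ioo).2 (ae_of_all _ fun u hu => inv_nonneg.2
        (ha.trans hu.1).le)),
    ← integral_Ioc_eq_integral_Ioo, ← intervalIntegral.integral_of_le hab,
    integral_inv_of_pos ha (ha.trans_le hab)]

lemma ENNReal.le_ofReal_mul_rpow_mul_rpow {x A B : ℝ≥0∞} {c L q α : ℝ} (hc : 0 ≤ c)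
    (hL : 1 ≤ L) (hqα : q ≤ α) (hα₀ : 0 ≤ α) (hα₁ : α ≤ 1)
    (hA : x ≤ ENNReal.ofReal (c * L ^ q) * A) (hB : x ≤ ENNReal.ofReal (c * L ^ (q - 1)) * B) :
    x ≤ ENNReal.ofReal c * A ^ (1 - α) * B ^ α := by
  have hL₀ : 0 < L := by linarith
  have hweights : (c * L ^ q) ^ (1 - α) * (c * L ^ (q - 1)) ^ α = c * L ^ (q - α) := by
    rw [Real.mul_rpow hc (by positivity), Real.mul_rpow hc (by positivity),
      ← Real.rpow_mul hL₀.le, ← Real.rpow_mul hL₀.le, mul_mul_mul_comm,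
      ← Real.rpow_add_of_nonneg hc (by linarith) hα₀, ← Real.rpow_add hL₀, sub_add_cancel,
      Real.rpow_one]
    congr 2
    ring
  calc x ≤ (ENNReal.ofReal (c * L ^ q) * A) ^ (1 - α) *
        (ENNReal.ofReal (c * L ^ (q - 1)) * B) ^ α :=
        ENNReal.le_rpow_mul_rpow_of_le hα₀ hα₁ hA hB
    _ = ENNReal.ofReal (c * L ^ (q - α)) * A ^ (1 - α) * B ^ α := by
        rw [ENNReal.mul_rpow_of_nonneg _ _ (by linarith), ENNReal.mul_rpow_of_nonneg _ _ hα₀,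
          ofReal_rpow_of_nonneg (by positivity) (by linarith),
          ofReal_rpow_of_nonneg (by positivity) hα₀, mul_mul_mul_comm, ← ofReal_mul (by positivity),
          hweights, mul_assoc]
    _ ≤ ENNReal.ofReal c * A ^ (1 - α) * B ^ α := by
        gcongr
        exact mul_le_of_le_one_right hc (Real.rpow_le_one_of_one_le_of_nonpos hL (by linarith))

section Rearrangement

variable {v : ℝ → ℝ} {p : ℝ}

lemma ofReal_rearr_mul_rpow_le (hv : Measurable v) (hp : 0 < p) {a b : ℝ} (ha : 0 ≤ a)
    (hab : a ≤ b) :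
    ENNReal.ofReal (rearr μ0 v b * (b - a) ^ (1 / p)) ≤
      (∫⁻ u in Ioo a b, ENNReal.ofReal (rearr μ0 v u ^ p)) ^ (1 / p) := by
  have hb := rearr_nonneg μ0 v b
  calc ENNReal.ofReal (rearr μ0 v b * (b - a) ^ (1 / p))
      = ENNReal.ofReal (rearr μ0 v b ^ p * (b - a)) ^ (1 / p) := by
        rw [ofReal_rpow_of_nonneg (mul_nonneg (Real.rpow_nonneg hb p) (by linarith)) (by positivity),
          Real.mul_rpow (Real.rpow_nonneg hb p) (by linarith), ← Real.rpow_mul hb,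
          mul_one_div_cancel hp.ne', Real.rpow_one]
    _ = (∫⁻ _ in Ioo a b, ENNReal.ofReal (rearr μ0 v b ^ p)) ^ (1 / p) := by
        rw [setLIntegral_const, Real.volume_Ioo, ofReal_mul (Real.rpow_nonneg hb p)]
    _ ≤ (∫⁻ u in Ioo a b, ENNReal.ofReal (rearr μ0 v u ^ p)) ^ (1 / p) := by
        refine ENNReal.rpow_le_rpow (setLIntegral_mono' measurableSet_Ioo fun u hu => ?_)
          (by positivity)
        exact ofReal_le_ofReal (Real.rpow_le_rpow hb
          (rearr_antitoneOn hv (ha.trans_lt hu.1) (ha.trans_lt (hu.1.trans hu.2)) hu.2.le) hp.le)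

lemma lintegral_rpow_le_grandNorm {r : ℝ} (hr : r ∈ Ioo 0 1) :
    (∫⁻ x in Ioo r 1, ENNReal.ofReal (rearr μ0 v x ^ p)) ^ (1 / p) ≤
      ENNReal.ofReal ((1 - Real.log r) ^ (1 / p)) * grandNorm p 1 v := by
  have hL : 0 < 1 - Real.log r := by linarith [Real.log_neg hr.1 hr.2]
  calc (∫⁻ x in Ioo r 1, ENNReal.ofReal (rearr μ0 v x ^ p)) ^ (1 / p)
      = ENNReal.ofReal ((1 - Real.log r) ^ (1 / p)) *
          (ENNReal.ofReal ((1 - Real.log r) ^ (-(1 / p))) *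
            (∫⁻ x in Ioo r 1, ENNReal.ofReal (rearr μ0 v x ^ p)) ^ (1 / p)) := by
        rw [← mul_assoc, ← ofReal_mul (Real.rpow_nonneg hL.le _), ← Real.rpow_add hL,
          add_neg_cancel, Real.rpow_zero, ofReal_one, one_mul]
    _ ≤ ENNReal.ofReal ((1 - Real.log r) ^ (1 / p)) * grandNorm p 1 v := by
        gcongr
        exact le_biSup (fun r => ENNReal.ofReal ((1 - Real.log r) ^ (-(1 / p))) *
          (∫⁻ x in Ioo r 1, ENNReal.ofReal (rearr μ0 v x ^ p)) ^ (1 / p)) hr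

lemma ofReal_rpow_mul_rearr_le_grandNorm (hv : Measurable v) (hp : 1 ≤ p) {s : ℝ}
    (hs : s ∈ Ioo 0 1) :
    ENNReal.ofReal (s ^ (1 / p) * rearr μ0 v s) ≤
      ENNReal.ofReal (4 * (1 - Real.log s) ^ (1 / p)) * grandNorm p 1 v := by
  obtain ⟨hs₀, hs₁⟩ := hs
  have hq₀ : 0 ≤ 1 / p := by positivity
  have hL : 1 ≤ 1 - Real.log s := by linarith [Real.log_neg hs₀ hs₁]
  have hlog_half : Real.log (s / 2) = Real.log s - Real.log 2 := Real.log_div hs₀.ne' two_ne_zero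
  have hlog_two := Real.log_pos one_lt_two
  have hhead : ENNReal.ofReal (rearr μ0 v s * (s / 2) ^ (1 / p)) ≤
      ENNReal.ofReal ((1 - Real.log (s / 2)) ^ (1 / p)) * grandNorm p 1 v := by
    refine le_trans ?_ (lintegral_rpow_le_grandNorm ⟨by positivity, by linarith⟩)
    have h := ofReal_rearr_mul_rpow_le hv (by linarith : (0 : ℝ) < p) (by positivity : 0 ≤ s / 2)
      (by linarith : s / 2 ≤ s)
    rw [show s - s / 2 = s / 2 by ring] at h
    exact h.trans (ENNReal.rpow_le_rpow (lintegral_mono_set (Ioo_subset_Ioo_right hs₁.le)) hq₀)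
  have hweight : 2 ^ (1 / p) * (1 - Real.log (s / 2)) ^ (1 / p) ≤ 4 * (1 - Real.log s) ^ (1 / p) :=
    calc 2 ^ (1 / p) * (1 - Real.log (s / 2)) ^ (1 / p)
        = (2 * (1 - Real.log (s / 2))) ^ (1 / p) := by
          rw [Real.mul_rpow (by norm_num) (by linarith)]
      _ ≤ (4 * (1 - Real.log s)) ^ (1 / p) :=
          Real.rpow_le_rpow (by linarith) (by linarith [Real.log_two_lt_d9]) hq₀
      _ ≤ 4 * (1 - Real.log s) ^ (1 / p) := by
          rw [Real.mul_rpow (by norm_num) (by linarith)]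
          gcongr
          exact Real.rpow_le_self_of_one_le (by norm_num) ((div_le_one (by linarith)).2 hp)
  calc ENNReal.ofReal (s ^ (1 / p) * rearr μ0 v s)
      = ENNReal.ofReal (2 ^ (1 / p)) * ENNReal.ofReal (rearr μ0 v s * (s / 2) ^ (1 / p)) := by
        have hsplit : s ^ (1 / p) = 2 ^ (1 / p) * (s / 2) ^ (1 / p) := by
          rw [← Real.mul_rpow (by norm_num) (by positivity), mul_div_cancel₀ s two_ne_zero]
        rw [hsplit, ← ofReal_mul (by positivity)]
        congr 1
        ring
    _ ≤ ENNReal.ofReal (2 ^ (1 / p)) *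
        (ENNReal.ofReal ((1 - Real.log (s / 2)) ^ (1 / p)) * grandNorm p 1 v) := by gcongr
    _ ≤ ENNReal.ofReal (4 * (1 - Real.log s) ^ (1 / p)) * grandNorm p 1 v := by
        rw [← mul_assoc, ← ofReal_mul (by positivity)]
        gcongr

lemma ofReal_mul_lintegral_rpow_le_smallNorm (hp : 0 < p) {w : ℝ} (hw : w ∈ Ioo 0 1) :
    ENNReal.ofReal ((1 - Real.log w) ^ (-(1 / p)) * -Real.log w) *
        (∫⁻ u in Ioo 0 w, ENNReal.ofReal (rearr μ0 v u ^ p)) ^ (1 / p) ≤ smallNorm p v := by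
  obtain ⟨hw₀, hw₁⟩ := hw
  have hLw : 0 < 1 - Real.log w := by linarith [Real.log_neg hw₀ hw₁]
  calc ENNReal.ofReal ((1 - Real.log w) ^ (-(1 / p)) * -Real.log w) *
        (∫⁻ u in Ioo 0 w, ENNReal.ofReal (rearr μ0 v u ^ p)) ^ (1 / p)
      = ∫⁻ u in Ioo w 1, ENNReal.ofReal ((1 - Real.log w) ^ (-(1 / p))) *
          (∫⁻ x in Ioo 0 w, ENNReal.ofReal (rearr μ0 v x ^ p)) ^ (1 / p) *
            ENNReal.ofReal u⁻¹ := by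
        rw [lintegral_const_mul _ measurable_inv.ennreal_ofReal, lintegral_Ioo_inv hw₀ hw₁.le,
          Real.log_div one_ne_zero hw₀.ne', Real.log_one, zero_sub,
          ofReal_mul (Real.rpow_nonneg hLw.le _)]
        ring
    _ ≤ ∫⁻ u in Ioo w 1, ENNReal.ofReal ((1 - Real.log u) ^ (-(1 / p)) / u) *
          (∫⁻ x in Ioo 0 u, ENNReal.ofReal (rearr μ0 v x ^ p)) ^ (1 / p) := by
        refine setLIntegral_mono' measurableSet_Ioo fun u ⟨hwu, hu₁⟩ => ?_
        have hu₀ := hw₀.trans hwu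
        have hLu : 0 < 1 - Real.log u := by linarith [Real.log_neg hu₀ hu₁]
        rw [div_eq_mul_inv _ u, ofReal_mul (Real.rpow_nonneg hLu.le _), mul_right_comm]
        gcongr ENNReal.ofReal ?_ * _ * ?_
        · exact Real.rpow_le_rpow_of_nonpos hLu
            (by linarith [Real.log_le_log hw₀ hwu.le]) (by simp [hp.le])
        · exact ENNReal.rpow_le_rpow (lintegral_mono_set (Ioo_subset_Ioo_right hwu.le))
            (by positivity)
    _ ≤ smallNorm p v := lintegral_mono_set (Ioo_subset_Ioo_left hw₀.le)

lemma lintegral_rpow_le_smallNorm (hp : 0 < p) {w : ℝ} (hw : w ∈ Ioo 0 1)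
    (hL : 2 ≤ 1 - Real.log w) :
    (∫⁻ u in Ioo 0 w, ENNReal.ofReal (rearr μ0 v u ^ p)) ^ (1 / p) ≤
      ENNReal.ofReal (2 * (1 - Real.log w) ^ (1 / p - 1)) * smallNorm p v := by
  set L := 1 - Real.log w
  have hL₀ : 0 < L := by linarith
  have hone : 1 ≤ 2 * L ^ (1 / p - 1) * (L ^ (-(1 / p)) * -Real.log w) := by
    rw [mul_assoc, ← mul_assoc (L ^ _), ← Real.rpow_add hL₀, show 1 / p - 1 + -(1 / p) = -1 by ring,
      Real.rpow_neg_one, show -Real.log w = L - 1 by ring, ← div_eq_inv_mul, mul_div_assoc',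
      le_div_iff₀ hL₀]
    linarith
  calc (∫⁻ u in Ioo 0 w, ENNReal.ofReal (rearr μ0 v u ^ p)) ^ (1 / p)
      ≤ ENNReal.ofReal (2 * L ^ (1 / p - 1) * (L ^ (-(1 / p)) * -Real.log w)) *
          (∫⁻ u in Ioo 0 w, ENNReal.ofReal (rearr μ0 v u ^ p)) ^ (1 / p) :=
        le_mul_of_one_le_left' (one_le_ofReal.2 hone)
    _ ≤ ENNReal.ofReal (2 * L ^ (1 / p - 1)) * smallNorm p v := by
        rw [ofReal_mul (by positivity), mul_assoc]
        gcongr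
        exact ofReal_mul_lintegral_rpow_le_smallNorm hp hw

lemma ofReal_rpow_mul_rearr_le_of_two_le (hv : Measurable v) (hp : 1 ≤ p) {α : ℝ}
    (hpα : 1 / p ≤ α) (hα : α ≤ 1) {s : ℝ} (hs : s ∈ Ioo 0 1) (hL : 2 ≤ 1 - Real.log s) :
    ENNReal.ofReal (s ^ (1 / p) * rearr μ0 v s) ≤
      ENNReal.ofReal 4 * grandNorm p 1 v ^ (1 - α) * smallNorm p v ^ α := by
  have hp₀ : 0 < p := by linarith
  have hsmall : ENNReal.ofReal (s ^ (1 / p) * rearr μ0 v s) ≤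
      ENNReal.ofReal (4 * (1 - Real.log s) ^ (1 / p - 1)) * smallNorm p v :=
    calc ENNReal.ofReal (s ^ (1 / p) * rearr μ0 v s)
        ≤ (∫⁻ u in Ioo 0 s, ENNReal.ofReal (rearr μ0 v u ^ p)) ^ (1 / p) := by
          simpa only [sub_zero, mul_comm] using ofReal_rearr_mul_rpow_le hv hp₀ le_rfl hs.1.le
      _ ≤ ENNReal.ofReal (2 * (1 - Real.log s) ^ (1 / p - 1)) * smallNorm p v :=
          lintegral_rpow_le_smallNorm hp₀ hs hL
      _ ≤ ENNReal.ofReal (4 * (1 - Real.log s) ^ (1 / p - 1)) * smallNorm p v := by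
          gcongr
          norm_num
  exact ENNReal.le_ofReal_mul_rpow_mul_rpow (by norm_num) (by linarith) hpα
    ((one_div_nonneg.2 hp₀.le).trans hpα) hα (ofReal_rpow_mul_rearr_le_grandNorm hv hp hs) hsmall

lemma ofReal_rpow_mul_rearr_le (hv : Measurable v) (hp : 1 ≤ p) {α : ℝ}
    (hpα : 1 / p ≤ α) (hα : α ≤ 1) {s : ℝ} (hs : s ∈ Ioo 0 1) :
    ENNReal.ofReal (s ^ (1 / p) * rearr μ0 v s) ≤
      ENNReal.ofReal 12 * grandNorm p 1 v ^ (1 - α) * smallNorm p v ^ α := by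
  by_cases hL : 2 ≤ 1 - Real.log s
  · refine (ofReal_rpow_mul_rearr_le_of_two_le hv hp hpα hα hs hL).trans ?_
    gcongr
    norm_num
  -- for `s > e⁻¹` compare with the point `w = e⁻¹`, where `1 - log w = 2`
  set w := Real.exp (-1)
  have hw : w ∈ Ioo 0 1 := ⟨Real.exp_pos _, Real.exp_lt_one_iff.2 (by norm_num)⟩
  have hws : w ≤ s := by
    rw [← Real.exp_log hs.1]
    exact Real.exp_le_exp.2 (by linarith)
  have hw_third : 1 ≤ 3 * w ^ (1 / p) := by
    have : w ≤ w ^ (1 / p) := by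
      simpa using Real.rpow_le_rpow_of_exponent_ge hw.1 hw.2.le
        ((div_le_one (by linarith)).2 hp)
    have : 1 ≤ 3 * w := by
      rw [show w = (Real.exp 1)⁻¹ from Real.exp_neg 1]
      have := Real.exp_one_lt_d9
      rw [le_mul_inv_iff₀ (Real.exp_pos 1)]
      linarith
    linarith
  have hcompare : s ^ (1 / p) * rearr μ0 v s ≤ 3 * (w ^ (1 / p) * rearr μ0 v w) :=
    calc s ^ (1 / p) * rearr μ0 v s ≤ rearr μ0 v w :=
          (mul_le_of_le_one_left (rearr_nonneg μ0 v s)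
            (Real.rpow_le_one hs.1.le hs.2.le (by positivity))).trans
            (rearr_antitoneOn hv hw.1 (hw.1.trans_le hws) hws)
      _ ≤ 3 * (w ^ (1 / p) * rearr μ0 v w) := by
          rw [← mul_assoc]
          exact le_mul_of_one_le_left (rearr_nonneg μ0 v w) hw_third
  calc ENNReal.ofReal (s ^ (1 / p) * rearr μ0 v s)
      ≤ ENNReal.ofReal 3 * ENNReal.ofReal (w ^ (1 / p) * rearr μ0 v w) := by
        rw [← ofReal_mul (by norm_num)]
        exact ofReal_le_ofReal hcompare
    _ ≤ ENNReal.ofReal 3 *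
        (ENNReal.ofReal 4 * grandNorm p 1 v ^ (1 - α) * smallNorm p v ^ α) := by
        gcongr
        exact ofReal_rpow_mul_rearr_le_of_two_le hv hp hpα hα hw (by norm_num [w])
    _ = ENNReal.ofReal 12 * grandNorm p 1 v ^ (1 - α) * smallNorm p v ^ α := by
        rw [← mul_assoc, ← mul_assoc, ← ofReal_mul (by norm_num)]
        norm_num

end Rearrangement

/-- Interpolation inequality: for `n ≥ 2`, `n' = n/(n-1)` and `1/n' < α ≤ 1`, there is
`c > 0` such that `‖v‖_{L^{n',∞}} ≤ c ‖v‖_{L^{n')}}^{1-α} ‖v‖_{L^{(n'}}^α` for every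
`v` in the small Lebesgue space `L^{(n'}`. -/
theorem stmt_19 (n : ℕ) (hn : 2 ≤ n) (α : ℝ)
    (hα1 : ((n:ℝ)-1)/n < α) (hα2 : α ≤ 1) :
    ∃ C : ℝ≥0∞, 0 < C ∧ C ≠ ⊤ ∧
      ∀ v : ℝ → ℝ, Measurable v → smallNorm ((n:ℝ)/((n:ℝ)-1)) v ≠ ⊤ →
        weakNorm ((n:ℝ)/((n:ℝ)-1)) v ≤
          C * (grandNorm ((n:ℝ)/((n:ℝ)-1)) 1 v) ^ (1-α) *
            (smallNorm ((n:ℝ)/((n:ℝ)-1)) v) ^ α := by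
  have hn' : (2 : ℝ) ≤ n := by exact_mod_cast hn
  have hp : 1 ≤ (n : ℝ) / (n - 1) := by
    rw [le_div_iff₀ (by linarith)]
    linarith
  have hpα : 1 / ((n : ℝ) / (n - 1)) ≤ α := by
    rw [one_div_div]
    exact hα1.le
  exact ⟨ENNReal.ofReal 12, by norm_num, ofReal_ne_top, fun v hv _ =>
    iSup₂_le fun s hs => ofReal_rpow_mul_rearr_le hv hp hpα hα2 hs⟩
end
end
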